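/- With H = V_K W_K and H^< = V_K Λ W_K as above, if rank(V_K) = rank(W_K) = m (full rank m, equal to the size of Λ), then rank(H) = m, and for any matrices V_0 ∈ ℂ^{Kk×m}, W_0 ∈ ℂ^{Kk×m}, Σ_0 ∈ ℂ^{m×m} with H = V_0 Σ_0 W_0ᴴ, V_0ᴴV_0 = I, W_0ᴴW_0 = I and Σ_0 invertible, the matrix A = V_0ᴴ H^< W_0 Σ_0^{-1} is similar to Λ; in particular A and Λ have the same eigenvalues. -/

import Mathlib

open Matrix

/-!
Compressing `H = V_K W_K` by the isometries `V₀ᴴ` and `W₀` recovers `Σ₀ = V₀ᴴ H W₀`, which is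
invertible. Hence `P = V₀ᴴ V_K` has the right inverse `W_K W₀ Σ₀⁻¹`, so it is invertible, and
`A = V₀ᴴ V_K Λ W_K W₀ Σ₀⁻¹ = P Λ P⁻¹`. The invertible `m × m` matrix `Σ₀` also factors through
`H`, which itself factors through `m` columns, so `rank H = m`.
-/

namespace Matrix

variable {ι n R : Type*} [Fintype ι] [Fintype n] [DecidableEq n]

theorem mul_mul_mul_eq_of_mul_eq_one [Semiring R] {X Y : Matrix n ι R} {V W : Matrix ι n R}
    (hXV : X * V = 1) (hYW : Y * W = 1) (S : Matrix n n R) :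
    X * (V * S * Y) * W = S := by
  calc X * (V * S * Y) * W = (X * V) * S * (Y * W) := by simp only [Matrix.mul_assoc]
    _ = S := by rw [hXV, hYW, Matrix.one_mul, Matrix.mul_one]

theorem rank_mul_eq_card_of_isUnit_mul_mul [CommRing R] [StrongRankCondition R]
    {V : Matrix ι n R} {W X : Matrix n ι R} {Y : Matrix ι n R}
    (h : IsUnit (X * (V * W) * Y)) : (V * W).rank = Fintype.card n := by
  refine le_antisymm ((rank_mul_le_left V W).trans (rank_le_card_width V)) ?_
  rw [← rank_of_isUnit _ h]
  exact (rank_mul_le_left _ Y).trans (rank_mul_le_right X _)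

section Compression

variable [CommRing R] {V : Matrix ι n R} {W X : Matrix n ι R} {Y : Matrix ι n R}

theorem mul_mul_inv_eq_one_of_isUnit_mul_mul (h : IsUnit (X * (V * W) * Y)) :
    X * V * (W * Y * (X * (V * W) * Y)⁻¹) = 1 := by
  rw [← mul_nonsing_inv _ ((isUnit_iff_isUnit_det _).mp h)]
  simp only [Matrix.mul_assoc]

theorem isUnit_mul_of_isUnit_mul_mul (h : IsUnit (X * (V * W) * Y)) : IsUnit (X * V) :=
  (isUnit_iff_isUnit_det _).mpr
    (isUnit_det_of_right_inverse (mul_mul_inv_eq_one_of_isUnit_mul_mul h))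

theorem mul_mul_mul_inv_eq_conj_of_isUnit_mul_mul (h : IsUnit (X * (V * W) * Y))
    (Λ : Matrix n n R) :
    X * (V * Λ * W) * Y * (X * (V * W) * Y)⁻¹ = X * V * Λ * (X * V)⁻¹ := by
  rw [inv_eq_right_inv (mul_mul_inv_eq_one_of_isUnit_mul_mul h)]
  simp only [Matrix.mul_assoc]

end Compression

theorem spectrum_mul_mul_inv_of_isUnit [CommRing R] {P : Matrix n n R} (hP : IsUnit P)
    (Λ : Matrix n n R) : spectrum R (P * Λ * P⁻¹) = spectrum R Λ := by
  obtain ⟨u, rfl⟩ := hP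
  rw [← coe_units_inv]
  exact spectrum.units_conjugate

end Matrix

theorem stmt_10_general {k m K : ℕ}
    (VK : Matrix (Fin K × Fin k) (Fin m) ℂ) (WK : Matrix (Fin m) (Fin K × Fin k) ℂ)
    (Λ : Matrix (Fin m) (Fin m) ℂ)
    (H Hlt : Matrix (Fin K × Fin k) (Fin K × Fin k) ℂ)
    (hH : H = VK * WK) (hHlt : Hlt = VK * Λ * WK)
    (V0 W0 : Matrix (Fin K × Fin k) (Fin m) ℂ) (Sig0 : Matrix (Fin m) (Fin m) ℂ)
    (hsvd : H = V0 * Sig0 * W0ᴴ) (hV0 : V0ᴴ * V0 = 1) (hW0 : W0ᴴ * W0 = 1)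
    (hSig0 : IsUnit Sig0)
    (A : Matrix (Fin m) (Fin m) ℂ) (hA : A = V0ᴴ * Hlt * W0 * Sig0⁻¹) :
    H.rank = m ∧
      (∃ P : Matrix (Fin m) (Fin m) ℂ, IsUnit P ∧ A = P * Λ * P⁻¹) ∧
      spectrum ℂ A = spectrum ℂ Λ := by
  have hSig : V0ᴴ * (VK * WK) * W0 = Sig0 := by
    rw [← hH, hsvd]
    exact mul_mul_mul_eq_of_mul_eq_one hV0 hW0 Sig0
  have hunit : IsUnit (V0ᴴ * (VK * WK) * W0) := hSig ▸ hSig0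
  have hconj : A = V0ᴴ * VK * Λ * (V0ᴴ * VK)⁻¹ := by
    rw [hA, hHlt, ← hSig, mul_mul_mul_inv_eq_conj_of_isUnit_mul_mul hunit]
  refine ⟨?_, ⟨_, isUnit_mul_of_isUnit_mul_mul hunit, hconj⟩, ?_⟩
  · rw [hH, rank_mul_eq_card_of_isUnit_mul_mul hunit, Fintype.card_fin]
  · rw [hconj, spectrum_mul_mul_inv_of_isUnit (isUnit_mul_of_isUnit_mul_mul hunit)]

/-- Extraction step of the block SS algorithm: if `H = V_K W_K`, `H^< = V_K Λ W_K` with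
`rank V_K = rank W_K = m`, then `rank H = m`; and for any exact compact SVD-type
factorization `H = V_0 Σ_0 W_0ᴴ` with `V_0ᴴV_0 = I`, `W_0ᴴW_0 = I` and `Σ_0` invertible,
the matrix `A = V_0ᴴ H^< W_0 Σ_0⁻¹` is similar to `Λ`; in particular `A` and `Λ` have the
same eigenvalues. -/
theorem stmt_10 {k m K : ℕ}
    (VK : Matrix (Fin K × Fin k) (Fin m) ℂ) (WK : Matrix (Fin m) (Fin K × Fin k) ℂ)
    (Λ : Matrix (Fin m) (Fin m) ℂ)
    (H Hlt : Matrix (Fin K × Fin k) (Fin K × Fin k) ℂ)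
    (hH : H = VK * WK) (hHlt : Hlt = VK * Λ * WK)
    (hVK : VK.rank = m) (hWK : WK.rank = m)
    (V0 W0 : Matrix (Fin K × Fin k) (Fin m) ℂ) (Sig0 : Matrix (Fin m) (Fin m) ℂ)
    (hsvd : H = V0 * Sig0 * W0ᴴ) (hV0 : V0ᴴ * V0 = 1) (hW0 : W0ᴴ * W0 = 1)
    (hSig0 : IsUnit Sig0)
    (A : Matrix (Fin m) (Fin m) ℂ) (hA : A = V0ᴴ * Hlt * W0 * Sig0⁻¹) :
    H.rank = m ∧
      (∃ P : Matrix (Fin m) (Fin m) ℂ, IsUnit P ∧ A = P * Λ * P⁻¹) ∧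
      spectrum ℂ A = spectrum ℂ Λ :=
  stmt_10_general VK WK Λ H Hlt hH hHlt V0 W0 Sig0 hsvd hV0 hW0 hSig0 A hA
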